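/- arXiv:1207.5677 — 2 statements merged into one kernel-verified Lean document; each statement's English description precedes it below -/
import Mathlib

section
/- Suppose q_z : [0,∞) → ℂ satisfies |q_z(τ)| ≤ M(1+τ)^{−3/2} for all τ ≥ 0. Define, for t ≥ 0, ĝ_t(u) = (i/u) q_z(t + 1/u) for u > 0. Then ∫₀^∞ |ĝ_t(u)|² √u du ≤ M² ∫₀^∞ u^{3/2}/((1+t)u + 1)³ du ≤ C M² (1+t)^{−5/2} for a universal constant C > 0. -/
/-!
Since `1 + t + 1/u = ((1 + t) u + 1) / u`, the decay hypothesis bounds the integrand pointwise by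
`M² u^{3/2} / ((1 + t) u + 1)³`. The substitution `v = (1 + t) u` turns the integral of the latter
into `(1 + t)^{-5/2} ∫₀^∞ v^{3/2} / (v + 1)³ dv`, and this last integral is finite because its
integrand behaves like `v^{3/2}` at `0` and like `v^{-3/2}` at `∞`.
-/

open Real MeasureTheory Set

section PowerKernel

variable {p : ℝ} {n : ℕ}

lemma rpow_div_mul_add_one_pow_eq {a u : ℝ} (ha : 0 < a) (hu : 0 ≤ u) :
    u ^ p / (a * u + 1) ^ n = a ^ (-p) * ((a * u) ^ p / (a * u + 1) ^ n) := by
  rw [mul_rpow ha.le hu, ← mul_div_assoc, ← mul_assoc, ← rpow_add ha, neg_add_cancel, rpow_zero,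
    one_mul]

lemma integrableOn_rpow_div_add_one_pow (hp : -1 < p) (hpn : p + 1 < n) :
    IntegrableOn (fun v : ℝ ↦ v ^ p / (v + 1) ^ n) (Ioi 0) := by
  have hmeas : AEStronglyMeasurable (fun v : ℝ ↦ v ^ p / (v + 1) ^ n) :=
    (by fun_prop : Measurable fun v : ℝ ↦ v ^ p / (v + 1) ^ n).aestronglyMeasurable
  have hnorm : ∀ v : ℝ, 0 < v → ‖v ^ p / (v + 1) ^ n‖ = v ^ p / (v + 1) ^ n := fun v hv ↦
    norm_of_nonneg (by positivity)
  rw [← Ioc_union_Ioi_eq_Ioi zero_le_one]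
  refine IntegrableOn.union ?_ ?_
  · have hint : IntegrableOn (fun v : ℝ ↦ v ^ p) (Ioc 0 1) :=
      (intervalIntegral.intervalIntegrable_rpow' hp).1
    refine hint.mono' hmeas.restrict ?_
    filter_upwards [ae_restrict_mem measurableSet_Ioc] with v hv
    rw [hnorm v hv.1]
    exact div_le_self (rpow_nonneg hv.1.le p) (one_le_pow₀ (by linarith [hv.1]))
  · refine (integrableOn_Ioi_rpow_of_lt (a := p - n) (by linarith) one_pos).mono' hmeas.restrict ?_
    filter_upwards [ae_restrict_mem measurableSet_Ioi] with v (hv : 1 < v)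
    have hv0 : 0 < v := one_pos.trans hv
    rw [hnorm v hv0, rpow_sub hv0, rpow_natCast]
    exact div_le_div_of_nonneg_left (rpow_nonneg hv0.le p) (by positivity)
      (pow_le_pow_left₀ hv0.le (by linarith) n)

lemma integrableOn_rpow_div_mul_add_one_pow {a : ℝ} (ha : 0 < a) (hp : -1 < p)
    (hpn : p + 1 < n) : IntegrableOn (fun u : ℝ ↦ u ^ p / (a * u + 1) ^ n) (Ioi 0) := by
  have hcomp := (integrableOn_Ioi_comp_mul_left_iff (fun v : ℝ ↦ v ^ p / (v + 1) ^ n) 0 ha).2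
    (by simpa using integrableOn_rpow_div_add_one_pow hp hpn)
  refine IntegrableOn.congr_fun (hcomp.const_mul (a ^ (-p))) (fun u hu ↦ ?_) measurableSet_Ioi
  exact (rpow_div_mul_add_one_pow_eq ha (le_of_lt hu)).symm

lemma integral_rpow_div_mul_add_one_pow {a : ℝ} (ha : 0 < a) :
    ∫ u in Ioi (0 : ℝ), u ^ p / (a * u + 1) ^ n
      = a ^ (-(p + 1)) * ∫ v in Ioi (0 : ℝ), v ^ p / (v + 1) ^ n := by
  rw [setIntegral_congr_fun measurableSet_Ioi
      fun u hu ↦ rpow_div_mul_add_one_pow_eq ha (le_of_lt hu), integral_const_mul,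
    integral_comp_mul_left_Ioi (fun v ↦ v ^ p / (v + 1) ^ n) 0 ha, mul_zero,
    smul_eq_mul, ← mul_assoc, ← rpow_neg_one, ← rpow_add ha, neg_add]

lemma integral_rpow_div_add_one_pow_pos (hp : -1 < p) (hpn : p + 1 < n) :
    0 < ∫ v in Ioi (0 : ℝ), v ^ p / (v + 1) ^ n := by
  have hsupp : (Function.support fun v : ℝ ↦ v ^ p / (v + 1) ^ n) ∩ Ioi 0 = Ioi 0 :=
    inter_eq_right.2 fun v (hv : 0 < v) ↦ (by positivity : 0 < v ^ p / (v + 1) ^ n).ne'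
  rw [setIntegral_pos_iff_support_of_nonneg_ae _ (integrableOn_rpow_div_add_one_pow hp hpn),
    hsupp, volume_Ioi]
  · exact ENNReal.zero_lt_top
  · filter_upwards [ae_restrict_mem measurableSet_Ioi] with v (hv : 0 < v)
    positivity

end PowerKernel

lemma inv_mul_rpow_sq_mul_sqrt_eq {a u : ℝ} (ha : 0 ≤ a) (hu : 0 < u) :
    (u⁻¹ * (a + u⁻¹) ^ (-(3 : ℝ) / 2)) ^ 2 * √u = u ^ ((3 : ℝ) / 2) / (a * u + 1) ^ 3 := by
  have hsq : ((a + u⁻¹) ^ (-(3 : ℝ) / 2)) ^ 2 = ((a + u⁻¹) ^ 3)⁻¹ := by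
    rw [← rpow_natCast, ← rpow_mul (by positivity), ← rpow_natCast, ← rpow_neg (by positivity)]
    norm_num
  have hrpow : u ^ ((3 : ℝ) / 2) = u * √u := by
    rw [sqrt_eq_rpow, ← rpow_one_add' hu.le (by norm_num)]
    norm_num
  rw [mul_pow, hsq, hrpow]
  field_simp

lemma norm_I_div_mul_sq_mul_sqrt_le {M t u : ℝ} {z : ℂ} (ht : 0 ≤ t) (hu : 0 < u)
    (hz : ‖z‖ ≤ M * (1 + (t + 1 / u)) ^ (-(3 : ℝ) / 2)) :
    ‖(Complex.I / (u : ℂ)) * z‖ ^ 2 * √u ≤ M ^ 2 * (u ^ ((3 : ℝ) / 2) / ((1 + t) * u + 1) ^ 3) := by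
  have hnorm : ‖(Complex.I / (u : ℂ)) * z‖ = u⁻¹ * ‖z‖ := by
    rw [norm_mul, norm_div, Complex.norm_I, Complex.norm_real, norm_of_nonneg hu.le, one_div]
  rw [← add_assoc, one_div] at hz
  calc ‖(Complex.I / (u : ℂ)) * z‖ ^ 2 * √u
      ≤ (u⁻¹ * (M * ((1 + t) + u⁻¹) ^ (-(3 : ℝ) / 2))) ^ 2 * √u := by
        rw [hnorm]
        gcongr
    _ = M ^ 2 * (u ^ ((3 : ℝ) / 2) / ((1 + t) * u + 1) ^ 3) := by
        rw [← inv_mul_rpow_sq_mul_sqrt_eq (by linarith) hu]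
        ring

/-- Weighted L² estimate on ĝ_t(u) = (i/u)q_z(t + 1/u) when |q_z(τ)| ≤ M(1+τ)^{−3/2}. -/
theorem stmt12 : ∃ C > (0:ℝ), ∀ (M : ℝ), 0 ≤ M → ∀ (qz : ℝ → ℂ),
    (∀ τ : ℝ, 0 ≤ τ → ‖qz τ‖ ≤ M * (1 + τ) ^ (-(3:ℝ)/2)) →
    ∀ t : ℝ, 0 ≤ t →
      (∫ u in Set.Ioi (0:ℝ), ‖(Complex.I / (u : ℂ)) * qz (t + 1 / u)‖ ^ 2 * Real.sqrt u)
        ≤ M ^ 2 * (∫ u in Set.Ioi (0:ℝ), u ^ ((3:ℝ)/2) / ((1 + t) * u + 1) ^ 3)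
      ∧ M ^ 2 * (∫ u in Set.Ioi (0:ℝ), u ^ ((3:ℝ)/2) / ((1 + t) * u + 1) ^ 3)
        ≤ C * M ^ 2 * (1 + t) ^ (-(5:ℝ)/2) := by
  have hp : (-1 : ℝ) < 3 / 2 := by norm_num
  have hpn : (3 : ℝ) / 2 + 1 < (3 : ℕ) := by norm_num
  refine ⟨_, integral_rpow_div_add_one_pow_pos hp hpn, fun M _ qz hq t ht ↦ ⟨?_, ?_⟩⟩
  · have ht1 : 0 < 1 + t := by linarith
    rw [← integral_const_mul]
    refine integral_mono_of_nonneg (ae_of_all _ fun u ↦ by positivity)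
      ((integrableOn_rpow_div_mul_add_one_pow ht1 hp hpn).const_mul _) ?_
    filter_upwards [ae_restrict_mem measurableSet_Ioi] with u (hu : 0 < u)
    exact norm_I_div_mul_sq_mul_sqrt_le ht hu (hq _ (by positivity))
  · rw [integral_rpow_div_mul_add_one_pow (by linarith),
      show -((3 : ℝ) / 2 + 1) = -5 / 2 by norm_num]
    exact le_of_eq (by ring)
end

section
/- Let ω > 0, σ ∈ (0, 1/√2), α₁ = −(2σ+1)√ω/(4π), α₂ = −√ω/(4π). Then the function W(λ) = (2σ+1)ω + i(σ+1)√ω(√(−ω−iλ) + √(−ω+iλ)) − √(−ω−iλ)√(−ω+iλ) (with the branch Im√(−ω±iλ) > 0) has no zeros λ with Re λ ≠ 0 or with |Im λ| < ω; equivalently the discrete spectrum of the linearization consists only of λ = 0. Moreover for σ ∈ (1/√2, 1), W has exactly the two purely imaginary zeros λ = ± i·2σ√(1−σ²)·ω. -/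
open Real

/-- Zeros of the Evans-type determinant W(λ) = (2σ+1)ω + i(σ+1)√ω(√(−ω−iλ)+√(−ω+iλ))
− √(−ω−iλ)√(−ω+iλ), with the branches of positive (nonnegative) imaginary part:
for σ ∈ (0,1/√2) the only zero with Re λ ≠ 0 or |Im λ| < ω is λ = 0, while for
σ ∈ (1/√2,1) the points λ = ±i·2σ√(1−σ²)ω are zeros. -/
theorem stmt16 (ω σ : ℝ) (hω : 0 < ω) (hσ : 0 < σ) :
    ((σ < 1 / Real.sqrt 2) →
      ∀ (l a b : ℂ), a ^ 2 = -(ω : ℂ) - Complex.I * l → b ^ 2 = -(ω : ℂ) + Complex.I * l →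
        0 ≤ a.im → 0 ≤ b.im →
        ((2 * σ + 1) * (ω : ℂ) + Complex.I * ((σ : ℂ) + 1) * (Real.sqrt ω : ℂ) * (a + b)
          - a * b = 0) →
        (l.re ≠ 0 ∨ |l.im| < ω) → l = 0)
    ∧ ((1 / Real.sqrt 2 < σ ∧ σ < 1) →
      ∀ e : ℝ, (e = 1 ∨ e = -1) →
      ∀ (a b : ℂ),
        a ^ 2 = -(ω : ℂ) - Complex.I * ((e : ℂ) * Complex.I * (2 * σ * Real.sqrt (1 - σ ^ 2) * ω)) →
        b ^ 2 = -(ω : ℂ) + Complex.I * ((e : ℂ) * Complex.I * (2 * σ * Real.sqrt (1 - σ ^ 2) * ω)) →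
        0 ≤ a.im → 0 ≤ b.im →
        (2 * σ + 1) * (ω : ℂ) + Complex.I * ((σ : ℂ) + 1) * (Real.sqrt ω : ℂ) * (a + b)
          - a * b = 0) := by
  set r := Real.sqrt ω with hrdef
  have hr0 : 0 < r := Real.sqrt_pos.mpr hω
  have hr2 : r ^ 2 = ω := Real.sq_sqrt hω.le
  have hrC : ((r : ℂ)) ^ 2 = (ω : ℂ) := by exact_mod_cast congrArg (Complex.ofReal ·) hr2
  have hs2 : (0:ℝ) < Real.sqrt 2 := Real.sqrt_pos.mpr (by norm_num)
  have hs2sq : Real.sqrt 2 ^ 2 = 2 := Real.sq_sqrt (by norm_num)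
  constructor
  · -- Part 1
    intro hσ2 l a b ha hb hia hib hW _
    have h2σ : 2 * σ ^ 2 < 1 := by
      rw [lt_div_iff₀ hs2] at hσ2
      nlinarith
    have hσ1 : σ < 1 := by nlinarith
    set t := Real.sqrt (1 - σ ^ 2) with htdef
    have ht2 : t ^ 2 = 1 - σ ^ 2 := Real.sq_sqrt (by nlinarith)
    have htC : ((t : ℂ)) ^ 2 = 1 - (σ:ℂ) ^ 2 := by
      exact_mod_cast congrArg (Complex.ofReal ·) ht2
    have htσ : σ < t := by
      nlinarith [Real.sqrt_nonneg (1 - σ ^ 2)]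
    have hS : (a + b - 2 * Complex.I * (r:ℂ)) * (a + b - 2 * Complex.I * (σ:ℂ) * (r:ℂ)) = 0 := by
      linear_combination ha + hb - 2 * hW + (4 * (σ:ℂ) * (r:ℂ)^2) * Complex.I_sq
        - 4 * (σ:ℂ) * hrC
    rcases mul_eq_zero.mp hS with h | h
    · -- a + b = 2 I r, hence a = b = I r, hence l = 0
      have hb2 : b = 2 * Complex.I * (r:ℂ) - a := by linear_combination h
      rw [hb2] at hW
      have h0 : (a - Complex.I * (r:ℂ)) ^ 2 = 0 := by
        linear_combination hW + (2 * (σ:ℂ) + 1) * hrC - (2 * (σ:ℂ) + 1) * (r:ℂ)^2 * Complex.I_sq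
      have haI : a = Complex.I * (r:ℂ) := by
        have := pow_eq_zero_iff (n := 2) (by norm_num) |>.mp h0
        linear_combination this
      rw [haI] at ha
      have hIl : Complex.I * l = 0 := by
        linear_combination ha + hrC - (r:ℂ)^2 * Complex.I_sq
      exact (mul_eq_zero.mp hIl).resolve_left Complex.I_ne_zero
    · -- a + b = 2 I σ r : contradiction with Im a, Im b ≥ 0
      exfalso
      have hb2 : b = 2 * Complex.I * (σ:ℂ) * (r:ℂ) - a := by linear_combination h
      rw [hb2] at hW
      have h0 : (a - Complex.I * (σ:ℂ) * (r:ℂ) - Complex.I * (t:ℂ) * (r:ℂ))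
          * (a - Complex.I * (σ:ℂ) * (r:ℂ) + Complex.I * (t:ℂ) * (r:ℂ)) = 0 := by
        linear_combination hW - Complex.I^2*(r:ℂ)^2 * htC
          - (2*(σ:ℂ)+1)*(r:ℂ)^2 * Complex.I_sq + (2*(σ:ℂ)+1) * hrC
      have hneg : (σ - t) * r < 0 := mul_neg_of_neg_of_pos (by linarith) hr0
      rcases mul_eq_zero.mp h0 with h1 | h1
      · -- a = I (σ + t) r, so b = I (σ - t) r with negative imaginary part
        have hbval : b = Complex.I * (((σ - t) * r : ℝ) : ℂ) := by
          push_cast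
          rw [hb2]
          linear_combination -h1
        rw [hbval] at hib
        simp [Complex.mul_im] at hib
        linarith
      · -- a = I (σ - t) r with negative imaginary part
        have haval : a = Complex.I * (((σ - t) * r : ℝ) : ℂ) := by
          push_cast
          linear_combination h1
        rw [haval] at hia
        simp [Complex.mul_im] at hia
        linarith
  · -- Part 2
    rintro ⟨hσl, hσu⟩ e he a b ha hb hia hib
    have h2σ : 1 < 2 * σ ^ 2 := by
      rw [div_lt_iff₀ hs2] at hσl
      nlinarith
    set t := Real.sqrt (1 - σ ^ 2) with htdef
    have ht2 : t ^ 2 = 1 - σ ^ 2 := Real.sq_sqrt (by nlinarith)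
    have ht0 : 0 < t := Real.sqrt_pos.mpr (by nlinarith)
    set k := 2 * σ * t with hkdef
    have hk0 : 0 < k := by positivity
    have hk1 : k < 1 := by nlinarith
    have he2 : e ^ 2 = 1 := by rcases he with rfl | rfl <;> norm_num
    have hekl : -1 < e * k := by rcases he with rfl | rfl <;> nlinarith
    have heku : e * k < 1 := by rcases he with rfl | rfl <;> nlinarith
    set ma := Real.sqrt ((1 - e * k) * ω) with hmadef
    set mb := Real.sqrt ((1 + e * k) * ω) with hmbdef
    have hma0 : 0 < ma := Real.sqrt_pos.mpr (mul_pos (by linarith) hω)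
    have hmb0 : 0 < mb := Real.sqrt_pos.mpr (mul_pos (by linarith) hω)
    have hma2 : ma ^ 2 = (1 - e * k) * ω := Real.sq_sqrt (mul_nonneg (by linarith) hω.le)
    have hmb2 : mb ^ 2 = (1 + e * k) * ω := Real.sq_sqrt (mul_nonneg (by linarith) hω.le)
    have hkC : (k : ℂ) = 2 * (σ:ℂ) * (t:ℂ) := by
      exact_mod_cast congrArg (Complex.ofReal ·) hkdef
    have hmaC : ((ma : ℂ)) ^ 2 = (1 - (e:ℂ) * (k:ℂ)) * (ω:ℂ) := by
      exact_mod_cast congrArg (Complex.ofReal ·) hma2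
    have hmbC : ((mb : ℂ)) ^ 2 = (1 + (e:ℂ) * (k:ℂ)) * (ω:ℂ) := by
      exact_mod_cast congrArg (Complex.ofReal ·) hmb2
    -- product of the square roots
    have hprod : ma * mb = (2 * σ ^ 2 - 1) * ω := by
      rw [hmadef, hmbdef, ← Real.sqrt_mul (mul_nonneg (by linarith) hω.le)]
      have hek2 : e ^ 2 * k ^ 2 = 1 - (2 * σ ^ 2 - 1) ^ 2 := by
        rw [he2]
        linear_combination (k + 2 * σ * t) * hkdef + 4 * σ ^ 2 * ht2
      have heq : (1 - e * k) * ω * ((1 + e * k) * ω) = ((2 * σ ^ 2 - 1) * ω) ^ 2 := by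
        linear_combination (-(ω ^ 2)) * hek2
      rw [heq, Real.sqrt_sq (mul_nonneg (by linarith) hω.le)]
    -- sum of the square roots
    have hsum : ma + mb = 2 * σ * r := by
      have hsq : (ma + mb) ^ 2 = (2 * σ * r) ^ 2 := by
        linear_combination hma2 + hmb2 + 2 * hprod - 4 * σ ^ 2 * hr2
      have := congrArg Real.sqrt hsq
      rwa [Real.sqrt_sq (by positivity), Real.sqrt_sq (by positivity)] at this
    -- identify a and b
    have ha2 : a ^ 2 = -((ma:ℂ)) ^ 2 := by
      linear_combination ha + hmaC - (e:ℂ)*(ω:ℂ)*hkC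
        - 2*(e:ℂ)*(σ:ℂ)*(t:ℂ)*(ω:ℂ)*Complex.I_sq
    have hb2' : b ^ 2 = -((mb:ℂ)) ^ 2 := by
      linear_combination hb + hmbC + (e:ℂ)*(ω:ℂ)*hkC
        + 2*(e:ℂ)*(σ:ℂ)*(t:ℂ)*(ω:ℂ)*Complex.I_sq
    have haI : a = Complex.I * (ma:ℂ) := by
      have h0 : (a - Complex.I * (ma:ℂ)) * (a + Complex.I * (ma:ℂ)) = 0 := by
        linear_combination ha2 - (ma:ℂ)^2 * Complex.I_sq
      rcases mul_eq_zero.mp h0 with h1 | h1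
      · linear_combination h1
      · exfalso
        have : a = -(Complex.I * (ma:ℂ)) := by linear_combination h1
        rw [this] at hia
        simp [Complex.mul_im] at hia
        linarith
    have hbI : b = Complex.I * (mb:ℂ) := by
      have h0 : (b - Complex.I * (mb:ℂ)) * (b + Complex.I * (mb:ℂ)) = 0 := by
        linear_combination hb2' - (mb:ℂ)^2 * Complex.I_sq
      rcases mul_eq_zero.mp h0 with h1 | h1
      · linear_combination h1
      · exfalso
        have : b = -(Complex.I * (mb:ℂ)) := by linear_combination h1
        rw [this] at hib
        simp [Complex.mul_im] at hib
        linarith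
    rw [haI, hbI]
    have hsumC : (ma : ℂ) + (mb : ℂ) = 2 * (σ:ℂ) * (r:ℂ) := by exact_mod_cast congrArg (Complex.ofReal ·) hsum
    have hprodC : (ma : ℂ) * (mb : ℂ) = (2 * (σ:ℂ) ^ 2 - 1) * (ω:ℂ) := by
      exact_mod_cast congrArg (Complex.ofReal ·) hprod
    linear_combination (Complex.I^2*((σ:ℂ)+1)*(r:ℂ)) * hsumC - Complex.I^2 * hprodC
      + (2*(σ:ℂ)*((σ:ℂ)+1)*(r:ℂ)^2 - (2*(σ:ℂ)^2-1)*(ω:ℂ)) * Complex.I_sq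
      - 2*(σ:ℂ)*((σ:ℂ)+1)*hrC
end
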